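/- arXiv:2509.22417 — 2 statements merged into one kernel-verified Lean document; each statement's English description precedes it below -/
import Mathlib

section
/- Let P : ℤ → SL(2,ℝ) satisfy sup_{i∈ℤ} ‖P(i)‖ < ∞ and admit a dominated splitting. Then there exist c > 0 and ξ > 1 such that ‖P_n(i)‖ ≥ c ξ^n for every n ∈ ℕ and every i ∈ ℤ. -/
open Matrix

noncomputable section

/-- Euclidean plane. -/
abbrev E2 := EuclideanSpace ℝ (Fin 2)

/-- The real projective line, as the projectivization of `ℝ²`. -/
abbrev RP1 := Projectivization ℝ E2

/-- The linear map on `E2` induced by a `2×2` matrix. -/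
def matLin (A : Matrix (Fin 2) (Fin 2) ℝ) : E2 →ₗ[ℝ] E2 :=
  (WithLp.linearEquiv 2 ℝ (Fin 2 → ℝ)).symm.toLinearMap ∘ₗ
    A.mulVecLin ∘ₗ (WithLp.linearEquiv 2 ℝ (Fin 2 → ℝ)).toLinearMap

/-- Matrix-vector multiplication on `E2`. -/
def mulVecE (A : Matrix (Fin 2) (Fin 2) ℝ) (v : E2) : E2 := matLin A v

/-- The action of an (invertible) matrix on the projective line `RP1`
(junk value if the matrix is not injective). -/
def matAct (A : Matrix (Fin 2) (Fin 2) ℝ) (x : RP1) : RP1 :=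
  open scoped Classical in
  if h : Function.Injective (matLin A) then Projectivization.map (matLin A) h x else x

/-- The (Euclidean) operator norm of a `2×2` matrix. -/
def matOpNorm (A : Matrix (Fin 2) (Fin 2) ℝ) : ℝ :=
  ‖LinearMap.toContinuousLinearMap (matLin A)‖

/-- The metric `d([u],[w]) = √(1 − (⟨u,w⟩/(‖u‖‖w‖))²)` on `RP1`. -/
def projDist (x y : RP1) : ℝ :=
  Real.sqrt (1 - ((inner ℝ x.rep y.rep : ℝ) / (‖x.rep‖ * ‖y.rep‖)) ^ 2)

/-- Forward cocycle iterates: `fwd A n i = A(i+n−1)⋯A(i)`. -/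
def fwd (A : ℤ → Matrix (Fin 2) (Fin 2) ℝ) : ℕ → ℤ → Matrix (Fin 2) (Fin 2) ℝ
  | 0, _ => 1
  | n + 1, i => A (i + n) * fwd A n i

/-- Backward cocycle iterates: `bwd A n i = A(i−n)⁻¹⋯A(i−1)⁻¹`. -/
def bwd (A : ℤ → Matrix (Fin 2) (Fin 2) ℝ) : ℕ → ℤ → Matrix (Fin 2) (Fin 2) ℝ
  | 0, _ => 1
  | n + 1, i => bwd A n (i - 1) * (A (i - 1))⁻¹

/-- `w` is a nonzero vector spanning the line `x ∈ RP1`. -/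
def SpansLine (w : E2) (x : RP1) : Prop := ∃ h : w ≠ 0, Projectivization.mk ℝ w h = x

/-- Uniform hyperbolicity witnessed by unstable/stable directions `u`, `s`. -/
def IsUHWith (P : ℤ → Matrix (Fin 2) (Fin 2) ℝ) (u s : ℤ → RP1) : Prop :=
  (∀ i : ℤ, matAct (P i) (u i) = u (i + 1) ∧ matAct (P i) (s i) = s (i + 1)) ∧
  ∃ C > 0, ∃ η > 1, ∀ i : ℤ, ∀ n : ℕ,
    (∀ w : E2, ‖w‖ = 1 → SpansLine w (u i) → ‖mulVecE (bwd P n i) w‖ ≤ C / η ^ n) ∧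
    (∀ w : E2, ‖w‖ = 1 → SpansLine w (s i) → ‖mulVecE (fwd P n i) w‖ ≤ C / η ^ n)

/-- Uniform hyperbolicity of a cocycle. -/
def IsUH (P : ℤ → Matrix (Fin 2) (Fin 2) ℝ) : Prop := ∃ u s, IsUHWith P u s

/-- Dominated splitting (DS1)–(DS4). -/
def IsDS (T : ℤ → Matrix (Fin 2) (Fin 2) ℝ) : Prop :=
  ∃ u s : ℤ → RP1,
    (∀ i : ℤ, matAct (T i) (u i) = u (i + 1) ∧ matAct (T i) (s i) = s (i + 1)) ∧
    ∃ N : ℕ, 1 ≤ N ∧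
      (∃ η > 1, ∀ i : ℤ, ∀ w w' : E2, ‖w‖ = 1 → ‖w'‖ = 1 →
        SpansLine w (u i) → SpansLine w' (s i) →
        ‖mulVecE (fwd T N i) w‖ > η * ‖mulVecE (fwd T N i) w'‖) ∧
      (∃ δ > 0, ∀ i : ℤ, projDist (u i) (s i) > δ) ∧
      (∃ c > 0, ∀ i : ℤ, c ≤ matOpNorm (fwd T N i))

/-!
Let `wu`, `ws` be unit vectors spanning `u i`, `s i` and `A = P_{kN}(i)`. Since `det A = 1`, `A`
preserves the area `|wedge wu ws|`, which (DS3) bounds below by `δ`; so `δ ≤ ‖A wu‖ ‖A ws‖`.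
Iterating (DS2) over `k` blocks of length `N` gives `η ^ k ‖A ws‖ ≤ ‖A wu‖`, hence
`δ η ^ k ≤ ‖A‖ ^ 2`. The bound `‖P j‖ ≤ M` carries this from multiples of `N` to every `n` at the
cost of a factor `M ^ N`.
-/
lemma mulVecE_apply (A : Matrix (Fin 2) (Fin 2) ℝ) (v : E2) (j : Fin 2) :
    mulVecE A v j = A j 0 * v 0 + A j 1 * v 1 := by
  fin_cases j <;> simp [mulVecE, matLin]

lemma mulVecE_mul (A B : Matrix (Fin 2) (Fin 2) ℝ) (v : E2) :
    mulVecE (A * B) v = mulVecE A (mulVecE B v) := by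
  simp [mulVecE, matLin]

lemma mulVecE_smul (A : Matrix (Fin 2) (Fin 2) ℝ) (c : ℝ) (v : E2) :
    mulVecE A (c • v) = c • mulVecE A v :=
  map_smul (matLin A) c v

lemma matLin_injective {A : Matrix (Fin 2) (Fin 2) ℝ} (hA : IsUnit A.det) :
    Function.Injective (matLin A) :=
  (WithLp.linearEquiv 2 ℝ (Fin 2 → ℝ)).symm.injective.comp <|
    (Matrix.mulVec_injective_iff_isUnit.2 ((Matrix.isUnit_iff_isUnit_det A).2 hA)).comp
      (WithLp.linearEquiv 2 ℝ (Fin 2 → ℝ)).injective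

lemma norm_mulVecE_le (A : Matrix (Fin 2) (Fin 2) ℝ) (v : E2) :
    ‖mulVecE A v‖ ≤ matOpNorm A * ‖v‖ :=
  Matrix.l2_opNorm_mulVec A v

lemma matOpNorm_mul_le (A B : Matrix (Fin 2) (Fin 2) ℝ) :
    matOpNorm (A * B) ≤ matOpNorm A * matOpNorm B :=
  Matrix.l2_opNorm_mul A B

lemma matOpNorm_one_le : matOpNorm 1 ≤ 1 :=
  ContinuousLinearMap.opNorm_le_bound _ zero_le_one fun v => by simp [matLin]

lemma matOpNorm_nonneg (A : Matrix (Fin 2) (Fin 2) ℝ) : 0 ≤ matOpNorm A :=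
  norm_nonneg _

def wedge (v w : E2) : ℝ := v 0 * w 1 - v 1 * w 0

lemma wedge_sq_add_inner_sq (v w : E2) :
    wedge v w ^ 2 + inner ℝ v w ^ 2 = ‖v‖ ^ 2 * ‖w‖ ^ 2 := by
  simp only [wedge, PiLp.inner_apply, EuclideanSpace.real_norm_sq_eq, Fin.sum_univ_two,
    RCLike.inner_apply, conj_trivial]
  ring

lemma abs_wedge_le (v w : E2) : |wedge v w| ≤ ‖v‖ * ‖w‖ :=
  abs_le_of_sq_le_sq (by nlinarith [wedge_sq_add_inner_sq v w, sq_nonneg (inner ℝ v w)])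
    (by positivity)

lemma wedge_mulVecE (A : Matrix (Fin 2) (Fin 2) ℝ) (v w : E2) :
    wedge (mulVecE A v) (mulVecE A w) = A.det * wedge v w := by
  simp only [wedge, mulVecE_apply, Matrix.det_fin_two]
  ring

lemma abs_wedge_le_of_det_eq_one {A : Matrix (Fin 2) (Fin 2) ℝ} (hA : A.det = 1) (v w : E2) :
    |wedge v w| ≤ ‖mulVecE A v‖ * ‖mulVecE A w‖ := by
  simpa [wedge_mulVecE, hA] using abs_wedge_le (mulVecE A v) (mulVecE A w)

lemma inner_div_norm_mul_norm_smul_sq (v w : E2) {a b : ℝ} (ha : a ≠ 0) (hb : b ≠ 0) :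
    (inner ℝ (a • v) (b • w) / (‖a • v‖ * ‖b • w‖)) ^ 2 = (inner ℝ v w / (‖v‖ * ‖w‖)) ^ 2 := by
  rw [real_inner_smul_left, real_inner_smul_right, norm_smul, norm_smul, Real.norm_eq_abs,
    Real.norm_eq_abs, div_pow, div_pow, mul_pow, mul_pow, mul_pow, mul_pow, mul_pow, sq_abs, sq_abs]
  field_simp

lemma projDist_mk {v w : E2} (hv : v ≠ 0) (hw : w ≠ 0) :
    projDist (Projectivization.mk ℝ v hv) (Projectivization.mk ℝ w hw) =
      |wedge v w| / (‖v‖ * ‖w‖) := by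
  obtain ⟨a, ha⟩ := Projectivization.exists_smul_eq_mk_rep ℝ v hv
  obtain ⟨b, hb⟩ := Projectivization.exists_smul_eq_mk_rep ℝ w hw
  have hvw : 0 < ‖v‖ * ‖w‖ := by positivity
  have hsin : 1 - (inner ℝ v w / (‖v‖ * ‖w‖)) ^ 2 = (wedge v w / (‖v‖ * ‖w‖)) ^ 2 := by
    field_simp
    linarith [wedge_sq_add_inner_sq v w]
  rw [projDist, ← ha, ← hb, Units.smul_def, Units.smul_def,
    inner_div_norm_mul_norm_smul_sq v w a.ne_zero b.ne_zero, hsin, Real.sqrt_sq_eq_abs, abs_div,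
    abs_of_pos hvw]

namespace SpansLine

variable {w : E2} {x : RP1}

lemma smul (h : SpansLine w x) {c : ℝ} (hc : c ≠ 0) : SpansLine (c • w) x := by
  obtain ⟨hw, rfl⟩ := h
  exact ⟨smul_ne_zero hc hw,
    (Projectivization.mk_eq_mk_iff ℝ _ _ _ hw).2 ⟨Units.mk0 c hc, rfl⟩⟩

lemma normalize (h : SpansLine w x) : SpansLine (‖w‖⁻¹ • w) x :=
  h.smul (inv_ne_zero (norm_ne_zero_iff.2 h.1))

lemma map {A : Matrix (Fin 2) (Fin 2) ℝ} (hA : IsUnit A.det) (h : SpansLine w x) :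
    SpansLine (mulVecE A w) (matAct A x) := by
  obtain ⟨hw, rfl⟩ := h
  have hinj := matLin_injective hA
  refine ⟨fun h0 => hw (hinj (h0.trans (map_zero _).symm)), ?_⟩
  rw [matAct, dif_pos hinj, Projectivization.map_mk]
  rfl

end SpansLine

lemma exists_unit_spansLine (x : RP1) : ∃ w : E2, ‖w‖ = 1 ∧ SpansLine w x :=
  ⟨_, norm_smul_inv_norm x.rep_nonzero,
    SpansLine.normalize ⟨x.rep_nonzero, Projectivization.mk_rep x⟩⟩

section Cocycle

variable {T : ℤ → Matrix (Fin 2) (Fin 2) ℝ}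

lemma fwd_add (A : ℤ → Matrix (Fin 2) (Fin 2) ℝ) (m n : ℕ) (i : ℤ) :
    fwd A (m + n) i = fwd A m (i + n) * fwd A n i := by
  induction m with
  | zero => simp [fwd]
  | succ m ih =>
    rw [Nat.add_right_comm, fwd, ih, fwd, mul_assoc]
    congr 2
    push_cast
    ring

lemma det_fwd (hT : ∀ j, (T j).det = 1) (n : ℕ) (i : ℤ) : (fwd T n i).det = 1 := by
  induction n with
  | zero => simp [fwd]
  | succ n ih => rw [fwd, Matrix.det_mul, hT, ih, one_mul]

lemma matOpNorm_fwd_le {M : ℝ} (hM : ∀ j, matOpNorm (T j) ≤ M) (n : ℕ) (i : ℤ) :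
    matOpNorm (fwd T n i) ≤ M ^ n := by
  induction n with
  | zero => exact matOpNorm_one_le.trans_eq (pow_zero M).symm
  | succ n ih =>
    rw [fwd, pow_succ']
    exact (matOpNorm_mul_le _ _).trans
      (mul_le_mul (hM _) ih (matOpNorm_nonneg _) ((matOpNorm_nonneg _).trans (hM 0)))

lemma SpansLine.map_fwd (hT : ∀ j, IsUnit (T j).det) {u : ℤ → RP1}
    (hu : ∀ j, matAct (T j) (u j) = u (j + 1)) {i : ℤ} {w : E2} (hw : SpansLine w (u i))
    (m : ℕ) : SpansLine (mulVecE (fwd T m i) w) (u (i + m)) := by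
  induction m with
  | zero => simpa [fwd, mulVecE, matLin] using hw
  | succ m ih =>
    rw [fwd, mulVecE_mul, Nat.cast_succ, ← add_assoc, ← hu]
    exact ih.map (hT _)

end Cocycle

def Dominates (A : Matrix (Fin 2) (Fin 2) ℝ) (η : ℝ) (x y : RP1) : Prop :=
  ∀ w w' : E2, ‖w‖ = 1 → ‖w'‖ = 1 → SpansLine w x → SpansLine w' y →
    ‖mulVecE A w‖ > η * ‖mulVecE A w'‖

lemma Dominates.mul_norm_lt {A : Matrix (Fin 2) (Fin 2) ℝ} {η : ℝ} {x y : RP1}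
    (hdom : Dominates A η x y) {v z : E2} (hv : SpansLine v x) (hz : SpansLine z y) :
    η * ‖mulVecE A z‖ * ‖v‖ < ‖mulVecE A v‖ * ‖z‖ := by
  have h := hdom (‖v‖⁻¹ • v) (‖z‖⁻¹ • z) (norm_smul_inv_norm hv.1) (norm_smul_inv_norm hz.1)
    hv.normalize hz.normalize
  rw [mulVecE_smul, mulVecE_smul, norm_smul, norm_smul, norm_inv, norm_inv, norm_norm,
    norm_norm, inv_mul_eq_div, inv_mul_eq_div, gt_iff_lt, mul_div_assoc',
    div_lt_div_iff₀ (norm_pos_iff.2 hz.1) (norm_pos_iff.2 hv.1)] at h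
  exact h

section Domination

variable {T : ℤ → Matrix (Fin 2) (Fin 2) ℝ} {u s : ℤ → RP1} {N : ℕ} {η : ℝ}

lemma pow_mul_norm_fwd_le (hT : ∀ j, IsUnit (T j).det)
    (hinv : ∀ i, matAct (T i) (u i) = u (i + 1) ∧ matAct (T i) (s i) = s (i + 1))
    (hη : 0 ≤ η)
    (hdom : ∀ i, Dominates (fwd T N i) η (u i) (s i))
    {i : ℤ} {v z : E2} (hv : SpansLine v (u i)) (hz : SpansLine z (s i)) (k : ℕ) :
    η ^ k * ‖mulVecE (fwd T (k * N) i) z‖ * ‖v‖ ≤ ‖mulVecE (fwd T (k * N) i) v‖ * ‖z‖ := by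
  induction k with
  | zero => simp [fwd, mulVecE, matLin, mul_comm]
  | succ k ih =>
    set A := fwd T (k * N) i
    set B := fwd T N (i + (k * N : ℕ))
    have hsplit : fwd T ((k + 1) * N) i = B * A := by rw [Nat.succ_mul, Nat.add_comm, fwd_add]
    have hv' := hv.map_fwd hT (fun j => (hinv j).1) (k * N)
    have hz' := hz.map_fwd hT (fun j => (hinv j).2) (k * N)
    have hstep := ((hdom _).mul_norm_lt hv' hz').le
    rw [hsplit, mulVecE_mul, mulVecE_mul]
    refine le_of_mul_le_mul_right ?_ (norm_pos_iff.2 hz'.1)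
    calc η ^ (k + 1) * ‖mulVecE B (mulVecE A z)‖ * ‖v‖ * ‖mulVecE A z‖
        = (η * ‖mulVecE B (mulVecE A z)‖) * (η ^ k * ‖mulVecE A z‖ * ‖v‖) := by ring
      _ ≤ (η * ‖mulVecE B (mulVecE A z)‖) * (‖mulVecE A v‖ * ‖z‖) := by gcongr
      _ = η * ‖mulVecE B (mulVecE A z)‖ * ‖mulVecE A v‖ * ‖z‖ := by ring
      _ ≤ ‖mulVecE B (mulVecE A v)‖ * ‖mulVecE A z‖ * ‖z‖ := by gcongr
      _ = ‖mulVecE B (mulVecE A v)‖ * ‖z‖ * ‖mulVecE A z‖ := by ring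

lemma mul_pow_le_matOpNorm_fwd_sq (hT : ∀ j, (T j).det = 1)
    (hinv : ∀ i, matAct (T i) (u i) = u (i + 1) ∧ matAct (T i) (s i) = s (i + 1))
    (hη : 0 ≤ η)
    (hdom : ∀ i, Dominates (fwd T N i) η (u i) (s i))
    {δ : ℝ} (hsep : ∀ i, projDist (u i) (s i) > δ) (k : ℕ) (i : ℤ) :
    δ * η ^ k ≤ matOpNorm (fwd T (k * N) i) ^ 2 := by
  obtain ⟨wu, hwu1, hwu⟩ := exists_unit_spansLine (u i)
  obtain ⟨ws, hws1, hws⟩ := exists_unit_spansLine (s i)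
  set A := fwd T (k * N) i
  have hangle : δ < |wedge wu ws| := by
    have h := hsep i
    rwa [← hwu.2, ← hws.2, projDist_mk, hwu1, hws1, mul_one, div_one] at h
  have harea := abs_wedge_le_of_det_eq_one (det_fwd hT (k * N) i) wu ws
  have hdomk := pow_mul_norm_fwd_le (fun j => (hT j).symm ▸ isUnit_one) hinv hη hdom hwu hws k
  rw [hwu1, hws1, mul_one, mul_one] at hdomk
  have hAwu : ‖mulVecE A wu‖ ≤ matOpNorm A := by simpa [hwu1] using norm_mulVecE_le A wu
  have hηk : 0 ≤ η ^ k := pow_nonneg hη k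
  calc δ * η ^ k ≤ ‖mulVecE A wu‖ * (η ^ k * ‖mulVecE A ws‖) := by nlinarith
    _ ≤ ‖mulVecE A wu‖ * ‖mulVecE A wu‖ := by gcongr
    _ ≤ matOpNorm A ^ 2 := by rw [← sq]; gcongr

end Domination

lemma exists_pow_le_matOpNorm_fwd_of_block {T : ℤ → Matrix (Fin 2) (Fin 2) ℝ} {M : ℝ}
    (hM1 : 1 ≤ M) (hM : ∀ j, matOpNorm (T j) ≤ M) {N : ℕ} (hN : 1 ≤ N) {c θ : ℝ} (hc : 0 < c)
    (hθ : 1 < θ)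
    (hblock : ∀ (k : ℕ) (i : ℤ), c * θ ^ k ≤ matOpNorm (fwd T (k * N) i)) :
    ∃ c > 0, ∃ ξ > 1, ∀ (n : ℕ) (i : ℤ), c * ξ ^ n ≤ matOpNorm (fwd T n i) := by
  set ξ := θ ^ ((N : ℝ)⁻¹)
  have hξ : 1 < ξ := Real.one_lt_rpow hθ (by positivity)
  have hξN : ξ ^ N = θ := Real.rpow_inv_natCast_pow (by linarith) (by omega)
  refine ⟨c / M ^ N, by positivity, ξ, hξ, fun n i => ?_⟩
  set k := n / N + 1
  obtain ⟨m, hm, hmN⟩ : ∃ m, k * N = m + n ∧ m ≤ N := by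
    have := Nat.div_add_mod' n N
    have := Nat.mod_lt n hN
    exact ⟨k * N - n, by rw [Nat.succ_mul]; omega, by rw [Nat.succ_mul]; omega⟩
  have hsplit : matOpNorm (fwd T (k * N) i) ≤ M ^ N * matOpNorm (fwd T n i) := by
    rw [hm, fwd_add]
    exact (matOpNorm_mul_le _ _).trans (mul_le_mul_of_nonneg_right
      ((matOpNorm_fwd_le hM m _).trans (pow_le_pow_right₀ hM1 hmN)) (matOpNorm_nonneg _))
  rw [div_mul_eq_mul_div, div_le_iff₀' (by positivity)]
  calc c * ξ ^ n ≤ c * θ ^ k := by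
        rw [← hξN, ← pow_mul, mul_comm N k]
        gcongr
        · exact hξ.le
        · omega
    _ ≤ matOpNorm (fwd T (k * N) i) := hblock k i
    _ ≤ M ^ N * matOpNorm (fwd T n i) := hsplit

lemma sqrt_mul_sqrt_pow_le {a b x : ℝ} (ha : 0 ≤ a) (hb : 0 ≤ b) (hx : 0 ≤ x) {k : ℕ}
    (h : a * b ^ k ≤ x ^ 2) : √a * √b ^ k ≤ x :=
  (pow_le_pow_iff_left₀ (by positivity) hx two_ne_zero).1 <| by
    rwa [mul_pow, ← pow_mul, mul_comm k, pow_mul, Real.sq_sqrt ha, Real.sq_sqrt hb]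

theorem stmt_2 (P : ℤ → Matrix.SpecialLinearGroup (Fin 2) ℝ)
    (hbdd : ∃ C : ℝ, ∀ i : ℤ, matOpNorm (P i : Matrix (Fin 2) (Fin 2) ℝ) ≤ C)
    (hDS : IsDS (fun i => (P i : Matrix (Fin 2) (Fin 2) ℝ))) :
    ∃ c > 0, ∃ ξ > 1, ∀ (n : ℕ) (i : ℤ),
      c * ξ ^ n ≤ matOpNorm (fwd (fun j => (P j : Matrix (Fin 2) (Fin 2) ℝ)) n i) := by
  obtain ⟨C, hC⟩ := hbdd
  obtain ⟨u, s, hinv, N, hN, ⟨η, hη, hdom⟩, ⟨δ, hδ, hsep⟩, -⟩ := hDS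
  refine exists_pow_le_matOpNorm_fwd_of_block (le_max_right C 1)
    (fun j => (hC j).trans (le_max_left C 1)) hN (Real.sqrt_pos.2 hδ)
    ((Real.lt_sqrt zero_le_one).2 (by simpa using hη)) fun k i => ?_
  exact sqrt_mul_sqrt_pow_le hδ.le (by linarith) (matOpNorm_nonneg _)
    (mul_pow_le_matOpNorm_fwd_sq (fun j => (P j).2) hinv (by linarith) hdom hsep k i)
end
end

section
/- Let A₁, …, A_D ∈ SL(2,ℝ) all be hyperbolic and suppose the family A₁, …, A_D satisfies the source-sink condition. Then the family A₁, …, A_D has an invariant cone. -/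
open Matrix

noncomputable section

/-- The quotient topology on the projective line. -/
noncomputable instance : TopologicalSpace RP1 :=
  inferInstanceAs (TopologicalSpace (Quotient (projectivizationSetoid ℝ E2)))

/-- An invariant cone for a finite family of matrices acting on `RP1`. -/
def InvariantCone {D : ℕ} (A : Fin D → Matrix (Fin 2) (Fin 2) ℝ) : Prop :=
  ∃ M : Set RP1, M.Nonempty ∧ IsOpen M ∧ closure M ≠ Set.univ ∧
    ∀ d : Fin D, closure (matAct (A d) '' M) ⊆ M

/-- `x` is the source (stable eigenline) of `A`. -/
def IsSourceOf (A : Matrix (Fin 2) (Fin 2) ℝ) (x : RP1) : Prop :=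
  ∃ (ξ : ℝ) (v : E2), |ξ| < 1 ∧ mulVecE A v = ξ • v ∧ SpansLine v x

/-- `x` is the sink (unstable eigenline) of `A`. -/
def IsSinkOf (A : Matrix (Fin 2) (Fin 2) ℝ) (x : RP1) : Prop :=
  ∃ (ξ : ℝ) (v : E2), 1 < |ξ| ∧ mulVecE A v = ξ • v ∧ SpansLine v x

/-- The source-sink condition: all sinks lie in the same connected component of the
complement of the set of sources. -/
def SourceSinkCond {D : ℕ} (srcs snks : Fin D → RP1) : Prop :=
  ∀ d d' : Fin D, snks d' ∈ connectedComponentIn {x : RP1 | ∀ e, srcs e ≠ x} (snks d)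

/-!
Each `A d` has an eigenvector `V` spanning its source, with eigenvalue `t`, and `W` spanning its
sink, with eigenvalue `u`, where `t u = det (A d) = 1`. If a quadratic form `q` satisfies
`q V < 0 < q W`, then in the coordinates `v = a V + b W` the matrix acts by `(a, b) ↦ (t a, u b)`
and `q (A v) = t u · q v + (t u - t²) a² (-q V) + (u² - t u) b² q W`; so `A d` maps `{q ≥ 0} ∖ 0`
into `{q > 0}`, and the lines on which `q` is positive form an invariant cone.

Such a `q` comes from the source-sink condition. Measure angles from a source. A source strictly
between two sinks would give a form vanishing only at sources that takes opposite signs at the two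
sinks, contradicting the connectedness of the component containing the sinks. So the sources avoid
an interval `[a, b]` of angles containing all the sinks, and `q v = wedge P v * wedge v Q` works for
the lines `P`, `Q` at the angles `a - ε`, `b + ε`.
-/

namespace SourceSinkCone

open Projectivization Real Filter Topology

def wedge (a b : E2) : ℝ := a 0 * b 1 - a 1 * b 0

/-- When `wedge P Q > 0` this is positive exactly on the lines strictly between `[P]` and `[Q]`
counterclockwise, and negative off the closed arc. -/
def arcForm (P Q v : E2) : ℝ := wedge P v * wedge v Q

lemma wedge_smul_add_smul (P V W : E2) (a b : ℝ) :
    wedge P (a • V + b • W) = a * wedge P V + b * wedge P W := by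
  simp only [wedge, PiLp.add_apply, PiLp.smul_apply, smul_eq_mul]; ring

lemma smul_add_smul_wedge (Q V W : E2) (a b : ℝ) :
    wedge (a • V + b • W) Q = a * wedge V Q + b * wedge W Q := by
  simp only [wedge, PiLp.add_apply, PiLp.smul_apply, smul_eq_mul]; ring

lemma wedge_smul_smul (a b : ℝ) (V W : E2) : wedge (a • V) (b • W) = a * b * wedge V W := by
  simp only [wedge, PiLp.smul_apply, smul_eq_mul]; ring

lemma wedge_comm (u v : E2) : wedge v u = -wedge u v := by
  simp only [wedge]; ring

lemma arcForm_smul (P Q : E2) (c : ℝ) (v : E2) : arcForm P Q (c • v) = c ^ 2 * arcForm P Q v := by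
  simp only [arcForm, wedge, PiLp.smul_apply, smul_eq_mul]; ring

/-- Cramer's rule. -/
lemma wedge_smul_eq (V W v : E2) : wedge V W • v = wedge v W • V + wedge V v • W := by
  ext i
  fin_cases i <;>
  · simp only [wedge, Fin.zero_eta, Fin.mk_one, PiLp.smul_apply, smul_eq_mul, PiLp.add_apply]
    ring

lemma exists_smul_eq_of_wedge_eq_zero {u v : E2} (hu : u ≠ 0) (h : wedge u v = 0) :
    ∃ c : ℝ, c • u = v := by
  have hn : u 0 ^ 2 + u 1 ^ 2 ≠ 0 := by
    contrapose! hu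
    ext i
    fin_cases i <;> simp <;> nlinarith [sq_nonneg (u 0), sq_nonneg (u 1)]
  refine ⟨(u 0 * v 0 + u 1 * v 1) / (u 0 ^ 2 + u 1 ^ 2), ?_⟩
  simp only [wedge] at h
  ext i
  fin_cases i
  · simp only [Fin.zero_eta, PiLp.smul_apply, smul_eq_mul]
    field_simp
    linear_combination u 1 * h
  · simp only [Fin.mk_one, PiLp.smul_apply, smul_eq_mul]
    field_simp
    linear_combination -(u 0) * h

lemma continuous_arcForm (P Q : E2) : Continuous (arcForm P Q) := by
  unfold arcForm wedge
  fun_prop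

lemma mulVecE_apply (A : Matrix (Fin 2) (Fin 2) ℝ) (v : E2) (i : Fin 2) :
    mulVecE A v i = A i 0 * v 0 + A i 1 * v 1 := by
  fin_cases i <;> simp [mulVecE, matLin]

lemma wedge_mulVecE (A : Matrix (Fin 2) (Fin 2) ℝ) (v w : E2) :
    wedge (mulVecE A v) (mulVecE A w) = A.det * wedge v w := by
  simp only [wedge, mulVecE_apply, Matrix.det_fin_two]; ring

lemma mulVecE_smul (A : Matrix (Fin 2) (Fin 2) ℝ) (c : ℝ) (v : E2) :
    mulVecE A (c • v) = c • mulVecE A v := map_smul (matLin A) c v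

lemma mulVecE_smul_add_smul (A : Matrix (Fin 2) (Fin 2) ℝ) (a b : ℝ) (v w : E2) :
    mulVecE A (a • v + b • w) = a • mulVecE A v + b • mulVecE A w := by
  simp [mulVecE]

lemma mulVecE_mulVecE (A B : Matrix (Fin 2) (Fin 2) ℝ) (v : E2) :
    mulVecE A (mulVecE B v) = mulVecE (A * B) v := by
  simp [mulVecE, matLin]

lemma mulVecE_one (v : E2) : mulVecE 1 v = v := by
  simp [mulVecE, matLin]

lemma mulVecE_nonsing_inv_mulVecE {A : Matrix (Fin 2) (Fin 2) ℝ} (hA : IsUnit A.det) (v : E2) :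
    mulVecE A⁻¹ (mulVecE A v) = v := by
  rw [mulVecE_mulVecE, Matrix.nonsing_inv_mul A hA, mulVecE_one]

lemma mulVecE_mulVecE_nonsing_inv {A : Matrix (Fin 2) (Fin 2) ℝ} (hA : IsUnit A.det) (v : E2) :
    mulVecE A (mulVecE A⁻¹ v) = v := by
  rw [mulVecE_mulVecE, Matrix.mul_nonsing_inv A hA, mulVecE_one]

lemma continuous_mulVecE (A : Matrix (Fin 2) (Fin 2) ℝ) : Continuous (mulVecE A) :=
  (matLin A).continuous_of_finiteDimensional

lemma injective_matLin {A : Matrix (Fin 2) (Fin 2) ℝ} (hA : IsUnit A.det) :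
    Function.Injective (matLin A) :=
  Function.LeftInverse.injective (g := matLin A⁻¹) (mulVecE_nonsing_inv_mulVecE hA)

lemma mulVecE_ne_zero {A : Matrix (Fin 2) (Fin 2) ℝ} (hA : IsUnit A.det) {v : E2} (hv : v ≠ 0) :
    mulVecE A v ≠ 0 :=
  (injective_matLin hA).ne hv |>.trans_eq (map_zero _)

lemma matAct_mk {A : Matrix (Fin 2) (Fin 2) ℝ} (hA : IsUnit A.det) {v : E2} (hv : v ≠ 0) :
    matAct A (mk ℝ v hv) = mk ℝ (mulVecE A v) (mulVecE_ne_zero hA hv) := by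
  rw [matAct, dif_pos (injective_matLin hA), map_mk]
  rfl

lemma pos_of_nonneg_of_eigenvalues {t u a b p₁ p₂ q₁ q₂ : ℝ} (ht : t ^ 2 < t * u)
    (hu : t * u < u ^ 2) (h₁ : p₁ * q₁ < 0) (h₂ : 0 < p₂ * q₂) (hab : a ≠ 0 ∨ b ≠ 0)
    (h : 0 ≤ (a * p₁ + b * p₂) * (a * q₁ + b * q₂)) :
    0 < (t * a * p₁ + u * b * p₂) * (t * a * q₁ + u * b * q₂) := by
  have htu : 0 < t * u := by nlinarith [sq_nonneg t]
  have key : (t * a * p₁ + u * b * p₂) * (t * a * q₁ + u * b * q₂)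
      = t * u * ((a * p₁ + b * p₂) * (a * q₁ + b * q₂))
        + (t * u - t ^ 2) * a ^ 2 * -(p₁ * q₁) + (u ^ 2 - t * u) * b ^ 2 * (p₂ * q₂) := by ring
  rw [key]
  have h₀ := mul_nonneg htu.le h
  rcases hab with ha | hb
  · have ha2 : 0 < a ^ 2 := by positivity
    nlinarith [mul_pos (mul_pos (sub_pos.2 ht) ha2) (neg_pos.2 h₁),
      mul_nonneg (mul_nonneg (sub_pos.2 hu).le (sq_nonneg b)) h₂.le]
  · have hb2 : 0 < b ^ 2 := by positivity
    nlinarith [mul_nonneg (mul_nonneg (sub_pos.2 ht).le (sq_nonneg a)) (neg_pos.2 h₁).le,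
      mul_pos (mul_pos (sub_pos.2 hu) hb2) h₂]

lemma wedge_ne_zero_of_arcForm {P Q V W : E2} (hV : arcForm P Q V < 0) (hW : 0 < arcForm P Q W) :
    wedge V W ≠ 0 := by
  intro h
  have hV0 : V ≠ 0 := by rintro rfl; simp [arcForm, wedge] at hV
  obtain ⟨c, rfl⟩ := exists_smul_eq_of_wedge_eq_zero hV0 h
  rw [arcForm_smul] at hW
  nlinarith [sq_nonneg c]

lemma arcForm_mulVecE_pos {B : Matrix (Fin 2) (Fin 2) ℝ} {P Q V W v : E2} {t u : ℝ}
    (hBV : mulVecE B V = t • V) (hBW : mulVecE B W = u • W) (ht : t ^ 2 < t * u)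
    (hu : t * u < u ^ 2) (hV : arcForm P Q V < 0) (hW : 0 < arcForm P Q W) (hv : v ≠ 0)
    (h : 0 ≤ arcForm P Q v) : 0 < arcForm P Q (mulVecE B v) := by
  set Δ := wedge V W
  have hΔ : Δ ≠ 0 := wedge_ne_zero_of_arcForm hV hW
  have hv' : Δ • v = wedge v W • V + wedge V v • W := wedge_smul_eq V W v
  have hBv : Δ • mulVecE B v = (t * wedge v W) • V + (u * wedge V v) • W := by
    rw [← mulVecE_smul, hv', mulVecE_smul_add_smul, hBV, hBW, smul_smul, smul_smul,
      mul_comm _ t, mul_comm _ u]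
  have hab : wedge v W ≠ 0 ∨ wedge V v ≠ 0 := by
    by_contra! h0
    rw [h0.1, h0.2, zero_smul, zero_smul, add_zero, smul_eq_zero] at hv'
    exact hv'.elim hΔ hv
  suffices 0 < arcForm P Q (Δ • mulVecE B v) by
    rw [arcForm_smul] at this; exact pos_of_mul_pos_right this (sq_nonneg _)
  have hΔv : 0 ≤ arcForm P Q (Δ • v) := by rw [arcForm_smul]; positivity
  rw [hv'] at hΔv
  rw [hBv]
  simp only [arcForm, wedge_smul_add_smul, smul_add_smul_wedge] at hΔv hV hW ⊢
  exact pos_of_nonneg_of_eigenvalues ht hu hV hW hab hΔv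

lemma wedge_ne_zero_of_eigenvalues_ne {B : Matrix (Fin 2) (Fin 2) ℝ} {V W : E2} {t u : ℝ}
    (hBV : mulVecE B V = t • V) (hBW : mulVecE B W = u • W) (hV : V ≠ 0) (hW : W ≠ 0)
    (htu : t ≠ u) : wedge V W ≠ 0 := by
  intro h
  obtain ⟨c, rfl⟩ := exists_smul_eq_of_wedge_eq_zero hV h
  rw [mulVecE_smul, hBV, smul_comm, ← sub_eq_zero, ← sub_smul, smul_eq_zero] at hBW
  exact hBW.elim (fun h => htu (sub_eq_zero.1 h)) hW

lemma sq_lt_mul_lt_sq_of_det_eq_one {B : Matrix (Fin 2) (Fin 2) ℝ} (hB : B.det = 1)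
    {V W : E2} {t u : ℝ} (hBV : mulVecE B V = t • V) (hBW : mulVecE B W = u • W)
    (hV : V ≠ 0) (hW : W ≠ 0) (ht : |t| < 1) (hu : 1 < |u|) :
    t ^ 2 < t * u ∧ t * u < u ^ 2 := by
  have hne : t ≠ u := by rintro rfl; linarith
  have hVW := wedge_ne_zero_of_eigenvalues_ne hBV hBW hV hW hne
  have htu : t * u = 1 := by
    have := wedge_mulVecE B V W
    rw [hBV, hBW, wedge_smul_smul, hB, one_mul] at this
    exact mul_right_cancel₀ hVW (this.trans (one_mul _).symm)
  rw [htu, ← sq_abs t, ← sq_abs u]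
  constructor <;> nlinarith [abs_nonneg t]

lemma exists_rep_eq_smul {v : E2} {x : RP1} (hx : SpansLine v x) :
    ∃ c : ℝ, c ≠ 0 ∧ x.rep = c • v := by
  obtain ⟨hv, rfl⟩ := hx
  obtain ⟨c, hc⟩ := exists_smul_eq_mk_rep ℝ v hv
  exact ⟨c, c.ne_zero, hc.symm⟩

lemma spansLine_mk {v : E2} (hv : v ≠ 0) : SpansLine v (mk ℝ v hv) := ⟨hv, rfl⟩

lemma mk_eq_of_wedge_eq_zero {u v : E2} (hu : u ≠ 0) (hv : v ≠ 0) (h : wedge u v = 0) :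
    mk ℝ v hv = mk ℝ u hu :=
  (mk_eq_mk_iff' ℝ v u hv hu).2 (exists_smul_eq_of_wedge_eq_zero hu h)

section EvenForm

variable {q : E2 → ℝ}

lemma pos_rep_iff (hq : ∀ (c : ℝ) v, q (c • v) = c ^ 2 * q v) {v : E2} {x : RP1}
    (hx : SpansLine v x) : 0 < q x.rep ↔ 0 < q v := by
  obtain ⟨c, hc, hrep⟩ := exists_rep_eq_smul hx
  rw [hrep, hq]
  exact mul_pos_iff_of_pos_left (by positivity)

lemma neg_rep_iff (hq : ∀ (c : ℝ) v, q (c • v) = c ^ 2 * q v) {v : E2} {x : RP1}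
    (hx : SpansLine v x) : q x.rep < 0 ↔ q v < 0 := by
  simpa using pos_rep_iff (q := fun v => -q v) (fun c v => by simp [hq]) hx

lemma nonneg_rep_iff (hq : ∀ (c : ℝ) v, q (c • v) = c ^ 2 * q v) {v : E2} {x : RP1}
    (hx : SpansLine v x) : 0 ≤ q x.rep ↔ 0 ≤ q v := by
  simpa only [not_lt] using (neg_rep_iff hq hx).not

lemma isOpen_setOf_pos_rep (hqc : Continuous q) (hq : ∀ (c : ℝ) v, q (c • v) = c ^ 2 * q v) :
    IsOpen {x : RP1 | 0 < q x.rep} := by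
  refine (isQuotientMap_quotient_mk' (s := projectivizationSetoid ℝ E2)).isOpen_preimage.1 ?_
  convert isOpen_lt continuous_const (hqc.comp continuous_subtype_val) using 1
  ext v
  exact pos_rep_iff hq (spansLine_mk v.2)

lemma isClosed_setOf_nonneg_rep (hqc : Continuous q)
    (hq : ∀ (c : ℝ) v, q (c • v) = c ^ 2 * q v) : IsClosed {x : RP1 | 0 ≤ q x.rep} := by
  have := isOpen_setOf_pos_rep (q := fun v => -q v) hqc.neg (fun c v => by simp [hq])
  simpa only [neg_pos, Set.compl_ofPred, not_lt] using this.isClosed_compl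

lemma pos_rep_of_isPreconnected (hqc : Continuous q)
    (hq : ∀ (c : ℝ) v, q (c • v) = c ^ 2 * q v) {C : Set RP1} (hC : IsPreconnected C)
    (hC₀ : ∀ x ∈ C, q x.rep ≠ 0) {x y : RP1} (hx : x ∈ C) (hy : y ∈ C) (hqx : 0 < q x.rep) :
    0 < q y.rep := by
  by_contra hqy
  have hqy : 0 < -q y.rep := neg_pos.2 <| (not_lt.1 hqy).lt_of_ne (hC₀ y hy)
  obtain ⟨z, -, hz₁, hz₂⟩ := hC _ _ (isOpen_setOf_pos_rep hqc hq)
    (isOpen_setOf_pos_rep (q := fun v => -q v) hqc.neg (fun c v => by simp [hq]))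
    (fun z hz => ((hC₀ z hz).lt_or_gt.imp neg_pos.2 id).symm) ⟨x, hx, hqx⟩ ⟨y, hy, hqy⟩
  simp only [Set.mem_ofPred_eq] at hz₁ hz₂
  linarith

lemma invariantCone_of_forall_nonneg_imp_pos {D : ℕ} (A : Fin D → Matrix (Fin 2) (Fin 2) ℝ)
    (hA : ∀ d, IsUnit (A d).det) (hqc : Continuous q) (hq : ∀ (c : ℝ) v, q (c • v) = c ^ 2 * q v)
    {x y : RP1} (hx : 0 < q x.rep) (hy : q y.rep < 0)
    (hmap : ∀ d v, v ≠ 0 → 0 ≤ q v → 0 < q (mulVecE (A d) v)) : InvariantCone A := by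
  refine ⟨{x | 0 < q x.rep}, ⟨x, hx⟩, isOpen_setOf_pos_rep hqc hq, fun huniv => ?_, fun d => ?_⟩
  · have := closure_minimal (fun _ hx => le_of_lt (α := ℝ) hx) (isClosed_setOf_nonneg_rep hqc hq)
      (huniv ▸ Set.mem_univ y)
    exact hy.not_ge this
  let q' : E2 → ℝ := fun v => q (mulVecE (A d)⁻¹ v)
  have hq' : ∀ (c : ℝ) v, q' (c • v) = c ^ 2 * q' v := fun c v => by
    simp only [q', mulVecE_smul, hq]
  have hAinv : IsUnit (A d)⁻¹.det := Matrix.isUnit_nonsing_inv_det _ (hA d)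
  have himage : matAct (A d) '' {x : RP1 | 0 < q x.rep} ⊆ {y | 0 ≤ q' y.rep} := by
    rintro _ ⟨x, hx, rfl⟩
    rw [← mk_rep x, matAct_mk (hA d)]
    refine (nonneg_rep_iff hq' (spansLine_mk _)).2 ?_
    simpa only [q', mulVecE_nonsing_inv_mulVecE (hA d)] using hx.le
  intro y hy
  have hy' := closure_minimal himage
    (isClosed_setOf_nonneg_rep (hqc.comp (continuous_mulVecE _)) hq') hy
  have := hmap d _ (mulVecE_ne_zero hAinv y.rep_nonzero) hy'
  rwa [mulVecE_mulVecE_nonsing_inv (hA d)] at this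

end EvenForm

def dir (θ : ℝ) : E2 := !₂[cos θ, sin θ]

lemma dir_ne_zero (θ : ℝ) : dir θ ≠ 0 := by
  intro h
  have h₀ : cos θ = 0 := congrArg (· 0) h
  have h₁ : sin θ = 0 := congrArg (· 1) h
  simpa [h₀, h₁] using sin_sq_add_cos_sq θ

def line (θ : ℝ) : RP1 := mk ℝ (dir θ) (dir_ne_zero θ)

lemma spansLine_dir (θ : ℝ) : SpansLine (dir θ) (line θ) := spansLine_mk _

lemma wedge_dir (a b : ℝ) : wedge (dir a) (dir b) = sin (b - a) := by
  simp only [wedge, dir, Matrix.cons_val_zero, Matrix.cons_val_one, sin_sub]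
  ring

lemma line_periodic : Function.Periodic line π := fun θ =>
  (mk_eq_mk_iff' ℝ _ _ _ _).2 ⟨-1, by ext i; fin_cases i <;> simp [dir, cos_add_pi, sin_add_pi]⟩

lemma line_surjective : Function.Surjective line := by
  intro x
  set z : ℂ := ⟨x.rep 0, x.rep 1⟩
  have hz : z ≠ 0 := by
    intro h
    apply x.rep_nonzero
    ext i
    fin_cases i
    · exact congrArg Complex.re h
    · exact congrArg Complex.im h
  refine ⟨z.arg, ?_⟩
  conv_rhs => rw [← mk_rep x]
  refine (mk_eq_mk_iff' ℝ _ _ _ _).2 ⟨‖z‖⁻¹, ?_⟩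
  ext i
  fin_cases i <;> simp [dir, Complex.cos_arg hz, Complex.sin_arg, z, inv_mul_eq_div]

lemma exists_mem_Ioc_line_eq (x : RP1) (γ : ℝ) : ∃ θ ∈ Set.Ioc γ (γ + π), line θ = x := by
  obtain ⟨ψ, rfl⟩ := line_surjective x
  refine ⟨toIocMod pi_pos γ ψ, toIocMod_mem_Ioc _ _ _, ?_⟩
  rw [← self_sub_toIocDiv_zsmul]
  exact line_periodic.sub_zsmul_eq _

lemma arcForm_dir (l r θ : ℝ) : arcForm (dir l) (dir r) (dir θ) = sin (θ - l) * sin (r - θ) := by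
  rw [arcForm, wedge_dir, wedge_dir]

lemma arcForm_dir_pos {l r θ : ℝ} (hl : l < θ) (hr : θ < r) (hlr : r - l ≤ π) :
    0 < arcForm (dir l) (dir r) (dir θ) := by
  rw [arcForm_dir]
  exact mul_pos (sin_pos_of_pos_of_lt_pi (by linarith) (by linarith))
    (sin_pos_of_pos_of_lt_pi (by linarith) (by linarith))

lemma arcForm_dir_neg {l r θ : ℝ} (hlr : l ≤ r) (hθ : θ < l ∨ r < θ) (h₁ : r - π < θ)
    (h₂ : θ < l + π) : arcForm (dir l) (dir r) (dir θ) < 0 := by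
  rw [arcForm_dir]
  rcases hθ with hθ | hθ
  · exact mul_neg_of_neg_of_pos (sin_neg_of_neg_of_neg_pi_lt (by linarith) (by linarith))
      (sin_pos_of_pos_of_lt_pi (by linarith) (by linarith))
  · exact mul_neg_of_pos_of_neg (sin_pos_of_pos_of_lt_pi (by linarith) (by linarith))
      (sin_neg_of_neg_of_neg_pi_lt (by linarith) (by linarith))

lemma arcForm_dir_eq_zero {l r : ℝ} {v : E2} (hv : v ≠ 0) (h : arcForm (dir l) (dir r) v = 0) :
    mk ℝ v hv = line l ∨ mk ℝ v hv = line r := by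
  rcases mul_eq_zero.1 h with h | h
  · exact .inl (mk_eq_of_wedge_eq_zero _ hv h)
  · rw [wedge_comm, neg_eq_zero] at h
    exact .inr (mk_eq_of_wedge_eq_zero _ hv h)

lemma exists_pos_forall_lt_sub_or_add_lt {κ : Type*} [Finite κ] {φ : κ → ℝ} {a b c : ℝ}
    (hc : 0 < c) (h : ∀ e, φ e < a ∨ b < φ e) :
    ∃ ε, 0 < ε ∧ ε < c ∧ ∀ e, φ e < a - ε ∨ b + ε < φ e := by
  have hsmall : ∀ {r : ℝ}, 0 < r → ∀ᶠ ε in 𝓝[>] (0 : ℝ), ε < r := fun hr =>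
    (eventually_lt_nhds hr).filter_mono nhdsWithin_le_nhds
  have hφ : ∀ᶠ ε in 𝓝[>] (0 : ℝ), ∀ e, φ e < a - ε ∨ b + ε < φ e := by
    refine eventually_all.2 fun e => ?_
    rcases h e with h | h
    · exact (hsmall (sub_pos.2 h)).mono fun ε hε => .inl (by linarith)
    · exact (hsmall (sub_pos.2 h)).mono fun ε hε => .inr (by linarith)
  obtain ⟨ε, hε, hεc, hεφ⟩ := (eventually_mem_nhdsWithin.and ((hsmall hc).and hφ)).exists
  exact ⟨ε, hε, hεc, hεφ⟩

/-- The form `arcForm (dir φ) (dir (σ + π))` vanishes only on `line φ` and `line σ`, yet it has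
opposite signs on `line θ₁` and `line θ₂`. -/
lemma notMem_Ioo_of_isPreconnected {C : Set RP1} (hC : IsPreconnected C) {σ φ θ₁ θ₂ : ℝ}
    (hσ : line σ ∉ C) (hφ : line φ ∉ C) (h₁ : line θ₁ ∈ C) (h₂ : line θ₂ ∈ C)
    (hσθ₁ : σ < θ₁) (hθ₂σ : θ₂ < σ + π) : φ ∉ Set.Ioo θ₁ θ₂ := by
  rintro ⟨hθ₁φ, hφθ₂⟩
  have hq := arcForm_smul (dir φ) (dir (σ + π))
  have hC₀ : ∀ x ∈ C, arcForm (dir φ) (dir (σ + π)) x.rep ≠ 0 := by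
    intro x hx h
    rcases arcForm_dir_eq_zero x.rep_nonzero h with h | h <;> rw [mk_rep] at h <;> subst h
    · exact hφ hx
    · exact hσ (line_periodic σ ▸ hx)
  have hpos := pos_rep_of_isPreconnected (continuous_arcForm _ _) hq hC hC₀ h₂ h₁
    ((pos_rep_iff hq (spansLine_dir _)).2 (arcForm_dir_pos hφθ₂ hθ₂σ (by linarith)))
  exact ((neg_rep_iff hq (spansLine_dir _)).2
    (arcForm_dir_neg (by linarith) (.inl hθ₁φ) (by linarith) (by linarith))).not_gt hpos

lemma exists_arcForm_separating {ι κ : Type*} [Finite ι] [Nonempty ι] [Finite κ] [Nonempty κ]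
    (srcs : κ → RP1) (snks : ι → RP1) {C : Set RP1} (hC : IsPreconnected C)
    (hsnk : ∀ d, snks d ∈ C) (hsrc : ∀ e, srcs e ∉ C) :
    ∃ P Q : E2, (∀ d, 0 < arcForm P Q (snks d).rep) ∧ ∀ e, arcForm P Q (srcs e).rep < 0 := by
  -- Angles lie in `(σ, σ + π]` with `line σ` a source; the sink angles range over `[θ dₐ, θ d_b]`.
  obtain ⟨e₀⟩ := ‹Nonempty κ›
  obtain ⟨σ, hσ⟩ := line_surjective (srcs e₀)
  choose φ hφ hφsrc using fun e => exists_mem_Ioc_line_eq (srcs e) σ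
  choose θ hθ hθsnk using fun d => exists_mem_Ioc_line_eq (snks d) σ
  have hθσ : ∀ d, θ d < σ + π := fun d => (hθ d).2.lt_of_ne fun h =>
    hsrc e₀ (by rw [← hσ, ← line_periodic σ, ← h, hθsnk]; exact hsnk d)
  obtain ⟨dₐ, ha⟩ := Finite.exists_min θ
  obtain ⟨d_b, hb⟩ := Finite.exists_max θ
  have hsep : ∀ e, φ e < θ dₐ ∨ θ d_b < φ e := by
    intro e
    by_contra! h
    have hne : ∀ d, θ d ≠ φ e := fun d hd => hsrc e (by rw [← hφsrc, ← hd, hθsnk]; exact hsnk d)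
    refine notMem_Ioo_of_isPreconnected hC (hσ ▸ hsrc e₀) (hφsrc e ▸ hsrc e)
      ((hθsnk dₐ).symm ▸ hsnk dₐ) ((hθsnk d_b).symm ▸ hsnk d_b) (hθ dₐ).1 (hθσ d_b)
      ⟨h.1.lt_of_ne (hne dₐ), h.2.lt_of_ne (hne d_b).symm⟩
  obtain ⟨ε, hε, hεc, hεφ⟩ := exists_pos_forall_lt_sub_or_add_lt
    (lt_min (sub_pos.2 (hθ dₐ).1) (sub_pos.2 (hθσ d_b))) hsep
  have hεa := min_le_left (θ dₐ - σ) (σ + π - θ d_b)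
  have hεb := min_le_right (θ dₐ - σ) (σ + π - θ d_b)
  have hq := arcForm_smul (dir (θ dₐ - ε)) (dir (θ d_b + ε))
  refine ⟨dir (θ dₐ - ε), dir (θ d_b + ε), fun d => ?_, fun e => ?_⟩
  · rw [← hθsnk d, pos_rep_iff hq (spansLine_dir _)]
    exact arcForm_dir_pos (by linarith [ha d]) (by linarith [hb d]) (by linarith)
  · rw [← hφsrc e, neg_rep_iff hq (spansLine_dir _)]
    exact arcForm_dir_neg (by linarith [ha d_b, hb dₐ]) (hεφ e) (by linarith [(hφ e).1])
      (by linarith [(hφ e).2])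

end SourceSinkCone

open SourceSinkCone

theorem stmt_7_general (D : ℕ) (hD : 1 ≤ D) (A : Fin D → Matrix.SpecialLinearGroup (Fin 2) ℝ)
    (srcs snks : Fin D → RP1)
    (hsrc : ∀ d : Fin D, IsSourceOf (A d : Matrix (Fin 2) (Fin 2) ℝ) (srcs d))
    (hsnk : ∀ d : Fin D, IsSinkOf (A d : Matrix (Fin 2) (Fin 2) ℝ) (snks d))
    (hss : SourceSinkCond srcs snks) :
    InvariantCone (fun d => (A d : Matrix (Fin 2) (Fin 2) ℝ)) := by
  let d₀ : Fin D := ⟨0, hD⟩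
  have : Nonempty (Fin D) := ⟨d₀⟩
  obtain ⟨P, Q, hsnkPQ, hsrcPQ⟩ := exists_arcForm_separating srcs snks
    isPreconnected_connectedComponentIn (hss d₀)
    (fun e he => connectedComponentIn_subset _ _ he e rfl)
  have hq := arcForm_smul P Q
  refine invariantCone_of_forall_nonneg_imp_pos _ (fun d => by simp) (continuous_arcForm P Q) hq
    (hsnkPQ d₀) (hsrcPQ d₀) fun d v hv hqv => ?_
  obtain ⟨t, V, ht, hV, hVsrc⟩ := hsrc d
  obtain ⟨u, W, hu, hW, hWsnk⟩ := hsnk d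
  obtain ⟨htu, hut⟩ := sq_lt_mul_lt_sq_of_det_eq_one (A d).det_coe hV hW hVsrc.1 hWsnk.1 ht hu
  exact arcForm_mulVecE_pos hV hW htu hut ((neg_rep_iff hq hVsrc).1 (hsrcPQ d))
    ((pos_rep_iff hq hWsnk).1 (hsnkPQ d)) hv hqv

theorem stmt_7 (D : ℕ) (hD : 1 ≤ D) (A : Fin D → Matrix.SpecialLinearGroup (Fin 2) ℝ)
    (hhyp : ∀ d : Fin D, |Matrix.trace (A d : Matrix (Fin 2) (Fin 2) ℝ)| > 2)
    (srcs snks : Fin D → RP1)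
    (hsrc : ∀ d : Fin D, IsSourceOf (A d : Matrix (Fin 2) (Fin 2) ℝ) (srcs d))
    (hsnk : ∀ d : Fin D, IsSinkOf (A d : Matrix (Fin 2) (Fin 2) ℝ) (snks d))
    (hss : SourceSinkCond srcs snks) :
    InvariantCone (fun d => (A d : Matrix (Fin 2) (Fin 2) ℝ)) :=
  stmt_7_general D hD A srcs snks hsrc hsnk hss
end
end
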